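/- ODE blow-up with lifespan estimate, nontrivial initial velocity. Let p > 1, c₀ ≥ 0 and c₁ > 0. Then there exist positive constants ε₀ and C, depending only on p, c₀ and c₁, such that for every ε ∈ (0, ε₀] and every T > 0 the following holds: if F : [0, T) → ℝ is twice continuously differentiable with F(0) = ε·c₀, F'(0) = ε·c₁, and F''(t) ≥ |F(t)|^p for all t ∈ [0, T), then T ≤ C·ε^{−(p−1)/(p+1)}. -/

import Mathlib

/-!
Since `F'' ≥ 0`, `F' ≥ F'(0) = εc₁` and hence `F(t) ≥ εc₁ t > 0`. The energy
`F'² - 2/(p+1) F^(p+1)` is then nondecreasing, and it is nonnegative at `t = 0` once `ε` is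
small, so `F' ≥ K F^(q+1)` with `K = √(2/(p+1))` and `q = (p-1)/2`. Consequently
`F^(-q) + qKt` is nonincreasing; comparing it at `b/2` and `b` gives
`qK b/2 ≤ (εc₁ b/2)^(-q)`, i.e. `b ≲ ε^(-q/(q+1)) = ε^(-(p-1)/(p+1))` for every `b < T`.
-/

open Set Real

noncomputable def energy (p : ℝ) (f f' : ℝ → ℝ) (t : ℝ) : ℝ :=
  f' t ^ 2 - 2 / (p + 1) * f t ^ (p + 1)

section Calculus

variable {f f' : ℝ → ℝ} {a b : ℝ}

lemma monotoneOn_Ico_of_hasDerivAt_nonneg (hf : ContinuousOn f (Ico a b))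
    (hd : ∀ t ∈ Ioo a b, HasDerivAt f (f' t) t) (hnn : ∀ t ∈ Ioo a b, 0 ≤ f' t) :
    MonotoneOn f (Ico a b) :=
  monotoneOn_of_hasDerivWithinAt_nonneg (convex_Ico a b) hf
    (by rw [interior_Ico]; exact fun t ht => (hd t ht).hasDerivWithinAt) (by rwa [interior_Ico])

lemma ContDiffOn.hasDerivAt_of_mem_Ioo (hf : ContDiffOn ℝ 1 f (Ico a b)) {t : ℝ}
    (ht : t ∈ Ioo a b) : HasDerivAt f (deriv f t) t :=
  ((hf.contDiffAt (Ico_mem_nhds ht.1 ht.2)).differentiableAt one_ne_zero).hasDerivAt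

lemma ContDiffOn.hasDerivAt_deriv_of_mem_Ioo (hf : ContDiffOn ℝ 2 f (Ico a b)) {t : ℝ}
    (ht : t ∈ Ioo a b) : HasDerivAt (deriv f) (deriv (deriv f) t) t :=
  (((hf.mono Ioo_subset_Ico_self).deriv_of_isOpen isOpen_Ioo (by norm_num)).contDiffAt
    (isOpen_Ioo.mem_nhds ht) |>.differentiableAt one_ne_zero).hasDerivAt

lemma ContDiffOn.continuousOn_deriv_Ico (hf : ContDiffOn ℝ 1 f (Ico a b))
    (ha : DifferentiableAt ℝ f a) : ContinuousOn (deriv f) (Ico a b) := by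
  refine (hf.continuousOn_derivWithin (uniqueDiffOn_Ico a b) le_rfl).congr fun t ht => ?_
  rcases ht.1.eq_or_lt with rfl | hat
  · exact (ha.derivWithin (uniqueDiffOn_Ico _ b _ ht)).symm
  · exact (derivWithin_of_mem_nhds (Ico_mem_nhds hat ht.2)).symm

lemma add_mul_sub_le_of_le_hasDerivAt {v : ℝ} (hf : ContinuousOn f (Ico a b))
    (hd : ∀ t ∈ Ioo a b, HasDerivAt f (f' t) t) (hv : ∀ t ∈ Ioo a b, v ≤ f' t) {t : ℝ}
    (ht : t ∈ Ico a b) : f a + v * (t - a) ≤ f t := by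
  have hmono : MonotoneOn (fun s => f s - v * s) (Ico a b) :=
    monotoneOn_Ico_of_hasDerivAt_nonneg (hf.sub (continuousOn_const.mul continuousOn_id))
      (fun s hs => (hd s hs).sub ((hasDerivAt_id s).const_mul v))
      (fun s hs => by simpa using hv s hs)
  have := hmono (left_mem_Ico.2 (ht.1.trans_lt ht.2)) ht ht.1
  simp only at this
  linarith

end Calculus

section Energy

variable {f f' f'' : ℝ → ℝ} {a b p t : ℝ}

lemma hasDerivAt_energy (hp : p + 1 ≠ 0) (hdf : HasDerivAt f (f' t) t)
    (hdf' : HasDerivAt f' (f'' t) t) (hpos : 0 < f t) :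
    HasDerivAt (energy p f f') (2 * f' t * (f'' t - f t ^ p)) t := by
  refine ((hdf'.fun_pow 2).sub ((hdf.rpow_const (p := p + 1) (Or.inl hpos.ne')).const_mul
    (2 / (p + 1)))).congr_deriv ?_
  field_simp
  ring_nf

lemma monotoneOn_energy (hp : 0 < p + 1) (hf : ContinuousOn f (Ico a b))
    (hf' : ContinuousOn f' (Ico a b)) (hdf : ∀ t ∈ Ioo a b, HasDerivAt f (f' t) t)
    (hdf' : ∀ t ∈ Ioo a b, HasDerivAt f' (f'' t) t) (hpos : ∀ t ∈ Ioo a b, 0 < f t)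
    (hf'nn : ∀ t ∈ Ioo a b, 0 ≤ f' t) (hineq : ∀ t ∈ Ioo a b, f t ^ p ≤ f'' t) :
    MonotoneOn (energy p f f') (Ico a b) :=
  monotoneOn_Ico_of_hasDerivAt_nonneg
    ((hf'.pow 2).sub (continuousOn_const.mul (hf.rpow_const fun _ _ => Or.inr hp.le)))
    (fun t ht => hasDerivAt_energy hp.ne' (hdf t ht) (hdf' t ht) (hpos t ht))
    (fun t ht => mul_nonneg (mul_nonneg zero_le_two (hf'nn t ht)) (sub_nonneg.2 (hineq t ht)))

lemma sqrt_mul_rpow_le_of_mul_rpow_le_sq {x y : ℝ} (hp : 0 < p + 1) (hx : 0 ≤ x) (hy : 0 ≤ y)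
    (h : 2 / (p + 1) * x ^ (p + 1) ≤ y ^ 2) : √(2 / (p + 1)) * x ^ ((p + 1) / 2) ≤ y := by
  have : x ^ ((p + 1) / 2) = √(x ^ (p + 1)) := by
    rw [sqrt_eq_rpow, ← rpow_mul hx]; ring_nf
  rw [this, ← sqrt_mul (by positivity), sqrt_le_iff]
  exact ⟨hy, h⟩

end Energy

section Riccati

variable {f f' : ℝ → ℝ} {a b q K A T : ℝ}

lemma antitoneOn_rpow_neg_add_mul (hq : 0 ≤ q) (hd : ∀ t ∈ Ioo a b, HasDerivAt f (f' t) t)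
    (hpos : ∀ t ∈ Ioo a b, 0 < f t) (hgrow : ∀ t ∈ Ioo a b, K * f t ^ (q + 1) ≤ f' t) :
    AntitoneOn (fun t => f t ^ (-q) + q * K * t) (Ioo a b) := by
  have hderiv : ∀ t ∈ Ioo a b,
      HasDerivAt (fun t => f t ^ (-q) + q * K * t) (f' t * -q * f t ^ (-q - 1) + q * K * 1) t :=
    fun t ht => ((hd t ht).rpow_const (Or.inl (hpos t ht).ne')).add
      ((hasDerivAt_id t).const_mul (q * K))
  refine antitoneOn_of_hasDerivWithinAt_nonpos (convex_Ioo a b)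
    (fun t ht => (hderiv t ht).continuousAt.continuousWithinAt)
    (by rw [interior_Ioo]; exact fun t ht => (hderiv t ht).hasDerivWithinAt) ?_
  rw [interior_Ioo]
  intro t ht
  have hK : K ≤ f' t * f t ^ (-q - 1) := by
    have h := mul_le_mul_of_nonneg_right (hgrow t ht) (rpow_nonneg (hpos t ht).le (-q - 1))
    rwa [mul_assoc, ← rpow_add (hpos t ht), show q + 1 + (-q - 1) = 0 by ring, rpow_zero,
      mul_one] at h
  linarith [mul_le_mul_of_nonneg_left hK hq]

lemma le_rpow_of_mul_le_rpow_neg {y B : ℝ} (hy : 0 < y) (hA : 0 < A) (hB : 0 < B)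
    (hq : 0 < q + 1) (h : B * y ≤ (A * y) ^ (-q)) : y ≤ (B * A ^ q) ^ (-(q + 1)⁻¹) := by
  have hBA : 0 < B * A ^ q := by positivity
  rw [rpow_neg hBA.le, ← inv_rpow hBA.le, le_rpow_inv_iff_of_pos hy.le (by positivity) hq,
    ← one_div, le_div_iff₀ hBA]
  calc y ^ (q + 1) * (B * A ^ q) = B * y * (A * y) ^ q := by
        rw [rpow_add_one hy.ne', mul_rpow hA.le hy.le]; ring
    _ ≤ (A * y) ^ (-q) * (A * y) ^ q := mul_le_mul_of_nonneg_right h (by positivity)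
    _ = 1 := by rw [← rpow_add (by positivity), neg_add_cancel, rpow_zero]

lemma lifespan_le_of_rpow_le_deriv (hq : 0 < q) (hK : 0 < K) (hA : 0 < A)
    (hd : ∀ t ∈ Ioo 0 T, HasDerivAt f (f' t) t) (hlin : ∀ t ∈ Ioo 0 T, A * t ≤ f t)
    (hgrow : ∀ t ∈ Ioo 0 T, K * f t ^ (q + 1) ≤ f' t) :
    T ≤ 2 * (q * K * A ^ q) ^ (-(q + 1)⁻¹) := by
  refine le_of_forall_lt_imp_le_of_dense fun b hbT => ?_
  rcases le_or_gt b 0 with hb | hb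
  · exact hb.trans (by positivity)
  have hpos : ∀ t ∈ Ioo 0 T, 0 < f t := fun t ht => (mul_pos hA ht.1).trans_le (hlin t ht)
  have hmid : b / 2 ∈ Ioo 0 T := ⟨by positivity, by linarith⟩
  have hanti := antitoneOn_rpow_neg_add_mul hq.le hd hpos hgrow hmid ⟨hb, hbT⟩ (by linarith)
  have hdecay : q * K * (b / 2) ≤ (A * (b / 2)) ^ (-q) := calc
    q * K * (b / 2) ≤ f (b / 2) ^ (-q) := by
      have := rpow_nonneg (hpos b ⟨hb, hbT⟩).le (-q)
      simp only at hanti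
      linarith
    _ ≤ (A * (b / 2)) ^ (-q) :=
      rpow_le_rpow_of_nonpos (by positivity) (hlin _ hmid) (by linarith)
  linarith [le_rpow_of_mul_le_rpow_neg (by positivity) hA (by positivity) (by linarith) hdecay]

end Riccati

section Lifespan

variable {f f' f'' : ℝ → ℝ} {p T : ℝ}

theorem lifespan_le_of_initial_energy_nonneg (hp : 1 < p)
    (hf : ContinuousOn f (Ico 0 T)) (hf' : ContinuousOn f' (Ico 0 T))
    (hdf : ∀ t ∈ Ioo 0 T, HasDerivAt f (f' t) t) (hdf' : ∀ t ∈ Ioo 0 T, HasDerivAt f' (f'' t) t)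
    (hineq : ∀ t ∈ Ioo 0 T, |f t| ^ p ≤ f'' t) (hf0 : 0 ≤ f 0) (hf'0 : 0 < f' 0)
    (hE0 : 0 ≤ energy p f f' 0) :
    T ≤ 2 * ((p - 1) / 2 * √(2 / (p + 1)) * f' 0 ^ ((p - 1) / 2)) ^ (-2 / (p + 1)) := by
  have hzero : ∀ t ∈ Ioo 0 T, (0 : ℝ) ∈ Ico 0 T := fun t ht => ⟨le_rfl, ht.1.trans ht.2⟩
  have hvel : ∀ t ∈ Ioo 0 T, f' 0 ≤ f' t := fun t ht =>
    monotoneOn_Ico_of_hasDerivAt_nonneg hf' hdf'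
      (fun s hs => (rpow_nonneg (abs_nonneg _) p).trans (hineq s hs))
      (hzero t ht) (Ioo_subset_Ico_self ht) ht.1.le
  have hlin : ∀ t ∈ Ioo 0 T, f' 0 * t ≤ f t := fun t ht => by
    have := add_mul_sub_le_of_le_hasDerivAt hf hdf hvel (Ioo_subset_Ico_self ht)
    rw [sub_zero] at this
    linarith
  have hpos : ∀ t ∈ Ioo 0 T, 0 < f t := fun t ht => (mul_pos hf'0 ht.1).trans_le (hlin t ht)
  have hEmono := monotoneOn_energy (p := p) (by linarith) hf hf' hdf hdf' hpos
    (fun t ht => hf'0.le.trans (hvel t ht))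
    (fun t ht => by simpa only [abs_of_pos (hpos t ht)] using hineq t ht)
  have hgrow : ∀ t ∈ Ioo 0 T, √(2 / (p + 1)) * f t ^ ((p - 1) / 2 + 1) ≤ f' t := fun t ht => by
    rw [show (p - 1) / 2 + 1 = (p + 1) / 2 by ring]
    refine sqrt_mul_rpow_le_of_mul_rpow_le_sq (by linarith) (hpos t ht).le
      (hf'0.le.trans (hvel t ht)) ?_
    have := hE0.trans (hEmono (hzero t ht) (Ioo_subset_Ico_self ht) ht.1.le)
    rw [energy] at this
    linarith
  have := lifespan_le_of_rpow_le_deriv (by linarith) (by positivity) hf'0 hdf hlin hgrow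
  rwa [show (p - 1) / 2 + 1 = (p + 1) / 2 by ring, inv_div, ← neg_div] at this

end Lifespan

lemma exists_pos_forall_rpow_le_sq {p c₀ c₁ : ℝ} (hp : 1 < p) (hc₀ : 0 ≤ c₀) (hc₁ : c₁ ≠ 0) :
    ∃ ε₀ > 0, ∀ ε ∈ Ioc 0 ε₀, 2 / (p + 1) * (ε * c₀) ^ (p + 1) ≤ (ε * c₁) ^ 2 := by
  set D := 2 / (p + 1) * c₀ ^ (p + 1) with hD_def
  have hD : 0 ≤ D := by positivity
  refine ⟨(c₁ ^ 2 / (D + 1)) ^ (p - 1)⁻¹, by positivity, fun ε ⟨hε, hεε₀⟩ => ?_⟩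
  have hsmall : ε ^ (p - 1) * D ≤ c₁ ^ 2 := calc
    ε ^ (p - 1) * D ≤ c₁ ^ 2 / (D + 1) * D := by
      gcongr
      calc ε ^ (p - 1) ≤ ((c₁ ^ 2 / (D + 1)) ^ (p - 1)⁻¹) ^ (p - 1) :=
            rpow_le_rpow hε.le hεε₀ (by linarith)
        _ = c₁ ^ 2 / (D + 1) := rpow_inv_rpow (by positivity) (by linarith)
    _ ≤ c₁ ^ 2 := by
      rw [div_mul_eq_mul_div, div_le_iff₀ (by positivity)]
      nlinarith [sq_nonneg c₁]
  have hsplit : ε ^ (p + 1) = ε ^ 2 * ε ^ (p - 1) := by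
    rw [show p + 1 = 2 + (p - 1) by ring, rpow_add hε, rpow_two]
  calc 2 / (p + 1) * (ε * c₀) ^ (p + 1) = ε ^ 2 * (ε ^ (p - 1) * D) := by
        rw [mul_rpow hε.le hc₀, hsplit, hD_def]; ring
    _ ≤ (ε * c₁) ^ 2 := by rw [mul_pow]; gcongr

lemma mul_mul_rpow_rpow {B ε c r s : ℝ} (hB : 0 ≤ B) (hε : 0 ≤ ε) (hc : 0 ≤ c) :
    (B * (ε * c) ^ r) ^ s = (B * c ^ r) ^ s * ε ^ (r * s) := by
  rw [mul_rpow hε hc, mul_left_comm, mul_rpow (by positivity) (by positivity), ← rpow_mul hε,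
    mul_comm]

/-- ODE blow-up with lifespan estimate, nontrivial initial velocity. -/
theorem ode_blowup_lifespan_nontrivial_velocity (p c₀ c₁ : ℝ) (hp : 1 < p)
    (hc₀ : 0 ≤ c₀) (hc₁ : 0 < c₁) :
    ∃ ε₀ > 0, ∃ C > 0, ∀ ε ∈ Set.Ioc (0 : ℝ) ε₀, ∀ T > (0 : ℝ),
      ∀ F : ℝ → ℝ, ContDiffOn ℝ 2 F (Set.Ico 0 T) →
        F 0 = ε * c₀ → deriv F 0 = ε * c₁ →
        (∀ t ∈ Set.Ico (0 : ℝ) T, |F t| ^ p ≤ deriv (deriv F) t) →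
        T ≤ C * ε ^ (-(p - 1) / (p + 1)) := by
  have hp1 : 0 < p - 1 := sub_pos.2 hp
  obtain ⟨ε₀, hε₀, hsmall⟩ := exists_pos_forall_rpow_le_sq hp hc₀ hc₁.ne'
  refine ⟨ε₀, hε₀, 2 * ((p - 1) / 2 * √(2 / (p + 1)) * c₁ ^ ((p - 1) / 2)) ^ (-2 / (p + 1)),
    by positivity, ?_⟩
  rintro ε ⟨hε, hεε₀⟩ T - F hF hF0 hF1 hF2
  have hF₁ : ContDiffOn ℝ 1 F (Ico 0 T) := hF.of_le one_le_two
  -- `deriv F 0 ≠ 0` forces two-sided differentiability at the endpoint `0`.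
  have hdiff0 : DifferentiableAt ℝ F 0 :=
    differentiableAt_of_deriv_ne_zero (by rw [hF1]; positivity)
  have hlife := lifespan_le_of_initial_energy_nonneg hp hF₁.continuousOn
    (hF₁.continuousOn_deriv_Ico hdiff0) (fun t ht => hF₁.hasDerivAt_of_mem_Ioo ht)
    (fun t ht => hF.hasDerivAt_deriv_of_mem_Ioo ht) (fun t ht => hF2 t (Ioo_subset_Ico_self ht))
    (by rw [hF0]; positivity) (by rw [hF1]; positivity)
    (by rw [energy, hF0, hF1]; linarith [hsmall ε ⟨hε, hεε₀⟩])
  rwa [hF1, mul_mul_rpow_rpow (by positivity) hε.le hc₁.le, ← mul_assoc,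
    show (p - 1) / 2 * (-2 / (p + 1)) = -(p - 1) / (p + 1) by ring] at hlife
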